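/- For every odd integer q ≥ 1 and every integer n ≥ 1, Σ_{k=0}^{n+q} C(n+q,k) · (Π_{j=1}^{q} (n+k+j)) · B_{n+k} = 0, where C(a,b) denotes the binomial coefficient and the product Π_{j=1}^{q} (n+k+j) = (n+k+1)(n+k+2)⋯(n+k+q). -/

import Mathlib

/-!
Let `L : ℚ[X] → ℚ` be the linear functional `X^m ↦ B_m`. The recurrence `∑_{k ≤ m} C(m,k) B_k =
(-1)^m B_m` says `L(p(X+1)) = L(p(-X))`, i.e. `L` is invariant under the reflection `x ↦ -1-x`.
The polynomial `(X(X+1))^(n+q)` is invariant under this reflection, so its `q`-th derivative is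
anti-invariant for odd `q` and is killed by `L`. Expanding that derivative in monomials gives the
identity.
-/

open Polynomial hiding bernoulli sum_bernoulli
open Finset

noncomputable def bernoulliFunctional : ℚ[X] →ₗ[ℚ] ℚ :=
  lsum fun m => bernoulli m • LinearMap.id

theorem bernoulliFunctional_X_pow (m : ℕ) : bernoulliFunctional (X ^ m) = bernoulli m := by
  simp [bernoulliFunctional, ← monomial_one_right_eq_X_pow, sum_monomial_index]

theorem sum_range_succ_choose_mul_bernoulli (m : ℕ) :
    ∑ k ∈ range (m + 1), (m.choose k : ℚ) * bernoulli k = bernoulli' m := by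
  rw [sum_range_succ, sum_bernoulli, Nat.choose_self, Nat.cast_one, one_mul]
  split_ifs with hm
  · subst hm
    norm_num
  · rw [zero_add, bernoulli_eq_bernoulli'_of_ne_one hm]

theorem bernoulliFunctional_X_add_one_pow (m : ℕ) :
    bernoulliFunctional ((X + 1) ^ m) = (-1) ^ m * bernoulli m := by
  simp_rw [add_pow, one_pow, mul_one, ← C_eq_natCast, mul_comm _ (C _), ← smul_eq_C_mul,
    map_sum, map_smul, bernoulliFunctional_X_pow, smul_eq_mul]
  rw [sum_range_succ_choose_mul_bernoulli, bernoulli'_eq_bernoulli]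

theorem bernoulliFunctional_neg_X_pow (m : ℕ) :
    bernoulliFunctional ((-X) ^ m) = (-1) ^ m * bernoulli m := by
  rw [neg_pow, ← C_1, ← C_neg, ← C_pow, ← smul_eq_C_mul, map_smul, bernoulliFunctional_X_pow,
    smul_eq_mul]

theorem bernoulliFunctional_comp_X_add_one (p : ℚ[X]) :
    bernoulliFunctional (p.comp (X + 1)) = bernoulliFunctional (p.comp (-X)) := by
  induction p using Polynomial.induction_on' with
  | add p q hp hq => simp only [add_comp, map_add, hp, hq]
  | monomial m a =>
    simp only [monomial_comp, ← smul_eq_C_mul, map_smul, bernoulliFunctional_X_add_one_pow,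
      bernoulliFunctional_neg_X_pow]

theorem bernoulliFunctional_comp_neg_one_sub_X (p : ℚ[X]) :
    bernoulliFunctional (p.comp (-1 - X)) = bernoulliFunctional p := by
  have h := bernoulliFunctional_comp_X_add_one (p.comp (-X))
  rwa [comp_assoc, comp_assoc, neg_comp, neg_comp, X_comp, X_comp, neg_neg, comp_X,
    neg_add', neg_sub_comm] at h

theorem iterate_derivative_comp_C_sub_X {R : Type*} [CommRing R] (a : R) (p : R[X]) (k : ℕ) :
    derivative^[k] (p.comp (C a - X)) = (-1) ^ k * (derivative^[k] p).comp (C a - X) := by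
  induction k generalizing p with
  | zero => simp
  | succ k ih => simp [ih (derivative p), derivative_comp, pow_succ]

theorem bernoulliFunctional_iterate_derivative_eq_zero {p : ℚ[X]} (hp : p.comp (-1 - X) = p)
    {q : ℕ} (hq : Odd q) : bernoulliFunctional (derivative^[q] p) = 0 := by
  have hanti : (derivative^[q] p).comp (-1 - X) = -derivative^[q] p := by
    have h := iterate_derivative_comp_C_sub_X (-1) p q
    rw [C_neg, C_1, hp, hq.neg_one_pow, neg_one_mul] at h
    linear_combination h
  have h := bernoulliFunctional_comp_neg_one_sub_X (derivative^[q] p)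
  rw [hanti, map_neg] at h
  linarith

theorem X_mul_X_add_one_pow_comp_neg_one_sub_X {R : Type*} [CommRing R] (N : ℕ) :
    ((X * (X + 1)) ^ N : R[X]).comp (-1 - X) = (X * (X + 1)) ^ N := by
  rw [pow_comp, mul_comp, add_comp, X_comp, one_comp]
  ring

theorem X_mul_X_add_one_pow_eq_sum {R : Type*} [CommSemiring R] (N : ℕ) :
    (X * (X + 1)) ^ N = ∑ k ∈ range (N + 1), (N.choose k : R) • (X : R[X]) ^ (N + k) := by
  rw [mul_pow, add_pow, mul_sum]
  refine sum_congr rfl fun k _ => ?_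
  rw [one_pow, mul_one, smul_eq_C_mul, C_eq_natCast, pow_add]
  ring

theorem iterate_derivative_X_mul_X_add_one_pow {R : Type*} [CommSemiring R] (n q : ℕ) :
    derivative^[q] ((X * (X + 1)) ^ (n + q) : R[X]) =
      ∑ k ∈ range (n + q + 1),
        (((n + q).choose k * (n + k + q).descFactorial q : ℕ) : R) • X ^ (n + k) := by
  rw [X_mul_X_add_one_pow_eq_sum, iterate_derivative_sum]
  refine sum_congr rfl fun k _ => ?_
  rw [iterate_derivative_smul, iterate_derivative_X_pow_eq_smul, smul_smul,
    show n + q + k - q = n + k by omega, add_right_comm n q k, Nat.cast_mul]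

theorem cast_add_descFactorial_eq_prod_Icc {R : Type*} [CommSemiring R] (m q : ℕ) :
    ((m + q).descFactorial q : R) = ∏ j ∈ Icc 1 q, ((m : R) + j) := by
  induction q with
  | zero => simp
  | succ q ih =>
    rw [prod_Icc_succ_top (Nat.le_add_left 1 q), ← ih, ← add_assoc, Nat.succ_descFactorial_succ]
    push_cast
    ring

theorem zekiri_bencherif_identity_general (q n : ℕ) (hq : Odd q) :
    ∑ k ∈ Finset.range (n + q + 1),
        ((n + q).choose k : ℚ) * (∏ j ∈ Finset.Icc 1 q, ((n : ℚ) + k + j)) *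
          bernoulli (n + k) = 0 := by
  have h := bernoulliFunctional_iterate_derivative_eq_zero
    (X_mul_X_add_one_pow_comp_neg_one_sub_X (n + q)) hq
  rw [iterate_derivative_X_mul_X_add_one_pow, map_sum] at h
  rw [← h]
  refine sum_congr rfl fun k _ => ?_
  rw [map_smul, bernoulliFunctional_X_pow, smul_eq_mul, Nat.cast_mul,
    cast_add_descFactorial_eq_prod_Icc, Nat.cast_add]

/-- Theorem 2 of the paper (Pearl 3): for odd `q ≥ 1` and `n ≥ 1`,
`∑_{k=0}^{n+q} C(n+q,k) (∏_{j=1}^{q} (n+k+j)) B_{n+k} = 0`. -/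
theorem zekiri_bencherif_identity (q n : ℕ) (hq : Odd q) (hq1 : 1 ≤ q) (hn : 1 ≤ n) :
    ∑ k ∈ Finset.range (n + q + 1),
        ((n + q).choose k : ℚ) * (∏ j ∈ Finset.Icc 1 q, ((n : ℚ) + k + j)) *
          bernoulli (n + k) = 0 :=
  zekiri_bencherif_identity_general q n hq
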